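/- Let F₁ > 0, F₂ ≥ 0, A > 1, and let F(x) = F₁ for 0 ≤ x < A and F(x) = F₂ for x ≥ A. Suppose all particles start at rest: v(x) = 0 for all x ∈ [0,1]. Then there are no collisions on [0,∞) if and only if F₂ ≥ F₁. -/

import Mathlib

open Set

/-- Trajectory of the particle starting at `x` with initial velocity `v x ≥ 0`, moving with
constant acceleration `F₁ > 0` until its position first reaches `A`, and with constant
acceleration `F₂ ≥ 0` afterwards.  The crossing time is
`T = (−v(x) + √(v(x)² + 2F₁(A − x)))/F₁`. -/
noncomputable def stepTraj (F₁ F₂ A : ℝ) (v : ℝ → ℝ) (x t : ℝ) : ℝ :=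
  let T := (-(v x) + Real.sqrt (v x ^ 2 + 2 * F₁ * (A - x))) / F₁
  if t ≤ T then x + v x * t + F₁ * t ^ 2 / 2
  else A + (v x + F₁ * T) * (t - T) + F₂ * (t - T) ^ 2 / 2

private lemma traj_eq (F₁ F₂ A x t : ℝ) (hF₁ : 0 < F₁) :
    stepTraj F₁ F₂ A (fun _ => 0) x t =
      if t ≤ Real.sqrt (2*F₁*(A-x)) / F₁ then x + F₁ * t^2/2
      else A + Real.sqrt (2*F₁*(A-x)) * (t - Real.sqrt (2*F₁*(A-x))/F₁)
            + F₂ * (t - Real.sqrt (2*F₁*(A-x))/F₁)^2/2 := by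
  have h : F₁ * (Real.sqrt (2*F₁*(A-x)) / F₁) = Real.sqrt (2*F₁*(A-x)) :=
    mul_div_cancel₀ _ hF₁.ne'
  simp only [stepTraj, neg_zero, zero_add, ne_eq, zero_pow, zero_mul, add_zero, h]
  norm_num [h]

private lemma traj_cont (F₁ F₂ A x : ℝ) (hF₁ : 0 < F₁) (hF₂ : 0 ≤ F₂) (hx : x ≤ A) :
    Continuous (fun t => stepTraj F₁ F₂ A (fun _ => 0) x t) := by
  simp only [traj_eq F₁ F₂ A x _ hF₁]
  obtain ⟨w, hw, hw2⟩ : ∃ w, Real.sqrt (2*F₁*(A-x)) = w ∧ w^2 = 2*F₁*(A-x) :=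
    ⟨_, rfl, Real.sq_sqrt (by nlinarith)⟩
  rw [hw]
  apply Continuous.if_le (by fun_prop) (by fun_prop) continuous_id continuous_const
  intro a ha
  subst ha
  have h : F₁ ≠ 0 := hF₁.ne'
  field_simp
  nlinarith [hw2]

private lemma traj_mono (F₁ F₂ A : ℝ) (hF₁ : 0 < F₁) (hF₂ : 0 ≤ F₂) (hA : 1 < A)
    (hle : F₁ ≤ F₂) {x₁ x₂ : ℝ} (h₁ : 0 ≤ x₁) (h₂ : x₂ ≤ 1) (hx : x₁ < x₂)
    {t : ℝ} (ht : 0 ≤ t) :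
    stepTraj F₁ F₂ A (fun _ => 0) x₁ t < stepTraj F₁ F₂ A (fun _ => 0) x₂ t := by
  rw [traj_eq F₁ F₂ A x₁ t hF₁, traj_eq F₁ F₂ A x₂ t hF₁]
  set w₁ := Real.sqrt (2*F₁*(A-x₁)) with hw₁def
  set w₂ := Real.sqrt (2*F₁*(A-x₂)) with hw₂def
  have hx₂A : x₂ < A := lt_of_le_of_lt h₂ hA
  have hx₁A : x₁ < A := hx.trans hx₂A
  have hw₁sq : w₁ ^ 2 = 2*F₁*(A-x₁) := Real.sq_sqrt (by nlinarith)
  have hw₂sq : w₂ ^ 2 = 2*F₁*(A-x₂) := Real.sq_sqrt (by nlinarith)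
  have hw₂pos : 0 < w₂ := Real.sqrt_pos.2 (by nlinarith)
  have hwlt : w₂ < w₁ := by
    rw [hw₁def, hw₂def]
    apply Real.sqrt_lt_sqrt (by nlinarith)
    nlinarith
  have hw₁pos : 0 < w₁ := hw₂pos.trans hwlt
  set T₁ := w₁ / F₁ with hT₁def
  set T₂ := w₂ / F₁ with hT₂def
  have hT₁ : F₁ * T₁ = w₁ := mul_div_cancel₀ _ hF₁.ne'
  have hT₂ : F₁ * T₂ = w₂ := mul_div_cancel₀ _ hF₁.ne'
  have hT₁pos : 0 < T₁ := div_pos hw₁pos hF₁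
  have hT₂pos : 0 < T₂ := div_pos hw₂pos hF₁
  have hTlt : T₂ < T₁ := by rw [hT₁def, hT₂def]; gcongr
  clear_value w₁ w₂ T₁ T₂
  rcases le_or_gt t T₂ with h2 | h2
  · rw [if_pos h2, if_pos (h2.trans hTlt.le)]
    linarith
  · rw [if_neg (not_le.2 h2)]
    rcases le_or_gt t T₁ with h1 | h1
    · rw [if_pos h1]
      have hFt : F₁ * t ≤ w₁ := by
        rw [← hT₁]; exact mul_le_mul_of_nonneg_left h1 hF₁.le
      have hsq : F₁^2 * t^2 ≤ 2*F₁*(A-x₁) := by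
        nlinarith [mul_nonneg (sub_nonneg.2 hFt)
          (by positivity : (0:ℝ) ≤ w₁ + F₁*t)]
      have hA1 : x₁ + F₁*t^2/2 ≤ A := by nlinarith [hsq]
      have hp1 : 0 < w₂ * (t - T₂) := mul_pos hw₂pos (by linarith)
      nlinarith [mul_nonneg hF₂ (sq_nonneg (t - T₂))]
    · rw [if_neg (not_le.2 h1)]
      have hd : 0 < T₁ - T₂ := by linarith
      have hbr : 0 < F₁*T₂ - F₁*(t-T₁) + F₂*((t-T₁)+(t-T₂))/2 := by
        linarith [mul_nonneg (sub_nonneg.2 hle) (by linarith : (0:ℝ) ≤ (t-T₁)+(t-T₂)),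
          mul_pos hF₁ hT₁pos, mul_pos hF₁ hT₂pos]
      rw [← hT₁, ← hT₂]
      linarith [mul_pos hd hbr]

/-- One gap, particles starting at rest: for `F₁ > 0`, `F₂ ≥ 0`, `A > 1`
and `v ≡ 0`, there are no collisions on `[0,∞)` iff `F₂ ≥ F₁`. -/
theorem step_force_rest_no_collisions_iff
    (F₁ F₂ A : ℝ) (hF₁ : 0 < F₁) (hF₂ : 0 ≤ F₂) (hA : 1 < A) :
    (∀ t, 0 ≤ t → ∀ x₁ ∈ Icc (0:ℝ) 1, ∀ x₂ ∈ Icc (0:ℝ) 1, x₁ ≠ x₂ →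
        stepTraj F₁ F₂ A (fun _ => 0) x₁ t ≠ stepTraj F₁ F₂ A (fun _ => 0) x₂ t) ↔
      F₁ ≤ F₂ := by
  constructor
  · intro H
    by_contra hlt
    push_neg at hlt
    set w₁ := Real.sqrt (2*F₁*(A-0)) with hw₁def
    set w₂ := Real.sqrt (2*F₁*(A-1)) with hw₂def
    have hw₁sq : w₁ ^ 2 = 2*F₁*(A-0) := Real.sq_sqrt (by nlinarith)
    have hw₂sq : w₂ ^ 2 = 2*F₁*(A-1) := Real.sq_sqrt (by nlinarith)
    have hw₂pos : 0 < w₂ := Real.sqrt_pos.2 (by nlinarith)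
    have hwlt : w₂ < w₁ := by
      rw [hw₁def, hw₂def]
      apply Real.sqrt_lt_sqrt (by nlinarith)
      nlinarith
    have hw₁pos : 0 < w₁ := hw₂pos.trans hwlt
    set T₁ := w₁ / F₁ with hT₁def
    set T₂ := w₂ / F₁ with hT₂def
    have hT₁ : F₁ * T₁ = w₁ := mul_div_cancel₀ _ hF₁.ne'
    have hT₂ : F₁ * T₂ = w₂ := mul_div_cancel₀ _ hF₁.ne'
    have hT₁pos : 0 < T₁ := div_pos hw₁pos hF₁
    have hT₂pos : 0 < T₂ := div_pos hw₂pos hF₁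
    have hTlt : T₂ < T₁ := by rw [hT₁def, hT₂def]; gcongr
    clear_value w₁ w₂ T₁ T₂
    set g : ℝ → ℝ := fun t =>
      stepTraj F₁ F₂ A (fun _ => 0) 1 t - stepTraj F₁ F₂ A (fun _ => 0) 0 t with hgdef
    have hgcont : Continuous g :=
      (traj_cont F₁ F₂ A 1 hF₁ hF₂ hA.le).sub (traj_cont F₁ F₂ A 0 hF₁ hF₂ (by linarith))
    have hg0 : g 0 = 1 := by
      rw [hgdef]
      simp only [traj_eq F₁ F₂ A _ _ hF₁]
      rw [← hw₁def, ← hw₂def, ← hT₁def, ← hT₂def,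
        if_pos hT₂pos.le, if_pos hT₁pos.le]
      norm_num
    set t₀ := T₁ + (F₁*T₁ + F₁*T₂ + 1)/(F₁ - F₂) with ht₀def
    clear_value t₀
    have hden : 0 < F₁ - F₂ := by linarith
    have hquot : 0 < (F₁*T₁ + F₁*T₂ + 1)/(F₁ - F₂) :=
      div_pos (by nlinarith [mul_pos hF₁ hT₁pos, mul_pos hF₁ hT₂pos]) hden
    have ht₀T₁ : T₁ < t₀ := by rw [ht₀def]; linarith
    have ht₀T₂ : T₂ < t₀ := hTlt.trans ht₀T₁
    have ht₀pos : 0 ≤ t₀ := by linarith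
    have hgt₀ : g t₀ < 0 := by
      rw [hgdef]
      simp only [traj_eq F₁ F₂ A _ _ hF₁]
      rw [← hw₁def, ← hw₂def, ← hT₁def, ← hT₂def,
        if_neg (not_le.2 ht₀T₂), if_neg (not_le.2 ht₀T₁), ← hT₁, ← hT₂]
      have hd : 0 < T₁ - T₂ := by linarith
      have hbr : F₁*T₂ - F₁*(t₀-T₁) + F₂*((t₀-T₁)+(t₀-T₂))/2 < 0 := by
        have ht₀eq : (F₁ - F₂) * t₀ = (F₁-F₂)*T₁ + (F₁*T₁ + F₁*T₂ + 1) := by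
          rw [ht₀def]; field_simp
        linarith [mul_nonneg hF₂ hT₂pos.le, mul_nonneg hF₂ hT₁pos.le,
          mul_nonneg hden.le hT₁pos.le, mul_nonneg hF₁.le hT₁pos.le]
      linarith [mul_pos hd (neg_pos.2 hbr)]
    have hsub : Icc (g t₀) (g 0) ⊆ g '' (Icc 0 t₀) :=
      intermediate_value_Icc' ht₀pos hgcont.continuousOn
    have h0mem : (0:ℝ) ∈ Icc (g t₀) (g 0) := ⟨hgt₀.le, by rw [hg0]; norm_num⟩
    obtain ⟨c, hc, hgc⟩ := hsub h0mem
    have hne := H c hc.1 0 ⟨le_refl 0, zero_le_one⟩ 1 ⟨zero_le_one, le_refl 1⟩ (by norm_num)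
    apply hne
    rw [hgdef] at hgc
    simp only at hgc
    linarith
  · intro hle t ht x₁ hx₁ x₂ hx₂ hne
    rcases hne.lt_or_gt with h | h
    · exact (traj_mono F₁ F₂ A hF₁ hF₂ hA hle hx₁.1 hx₂.2 h ht).ne
    · exact (traj_mono F₁ F₂ A hF₁ hF₂ hA hle hx₂.1 hx₁.2 h ht).ne'
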